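/- Path abstraction is monotonically absorbing: for a finite set S with a ∈ S, if S₁ ⊆ S₂ ⊆ S, then for every substochastic DTMC M ∈ ℳ(S, a), abstracting first over S₁ and then over S₂ yields the same result as abstracting over S₂ directly: (M − S₁) − S₂ = M − S₂. -/

import Mathlib

open scoped ENNReal

namespace PA

variable {α : Type*}

/-- Block contraction auxiliary: `prev` records whether the previous letter was in `K`
(i.e., we are inside a `K`-block whose first letter was already kept). -/
def contractAux [DecidableEq α] (K : Finset α) : Bool → List α → List α
  | _, [] => []
  | prev, a :: x =>
    if a ∈ K then
      (if prev then contractAux K true x else a :: contractAux K true x)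
    else a :: contractAux K false x

/-- `contract K x` is `x − K`: every maximal nonempty factor of `x` consisting of
letters of `K` is replaced by its first letter. -/
def contract [DecidableEq α] (K : Finset α) (x : List α) : List α :=
  contractAux K false x

/-- `preim K x` is `x + K`, the preimage of `x` under `contract K`. -/
def preim [DecidableEq α] (K : Finset α) (x : List α) : Set (List α) :=
  {x' | contract K x' = x}

/-- `minPref L` is `L^≤`: the prefix-minimal elements of `L`. -/
def minPref (L : Set (List α)) : Set (List α) :=
  {x ∈ L | ∀ x', x' <+: x → x' ≠ x → x' ∉ L}

/-- Fusion concatenation: for `u` ending in `a` and `v` starting with `a`,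
`fuse u v` is `u ++ v` with one copy of the shared letter removed. -/
def fuse (u v : List α) : List α := u ++ v.tail

/-- Elementwise fusion of sets of words. -/
def setFuse (X Y : Set (List α)) : Set (List α) :=
  {z | ∃ u ∈ X, ∃ v ∈ Y, z = fuse u v}

/-- Probability mass of a set of words: sum of `P` over the prefix-minimal elements. -/
noncomputable def setP (P : List α → ℝ≥0∞) (R : Set (List α)) : ℝ≥0∞ :=
  ∑' x : minPref R, P x.1

/-- `P ∈ 𝒯(S)`: substochastic transition probability function on `S⁺`. -/
def IsTPF [Fintype α] (P : List α → ℝ≥0∞) : Prop :=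
  (∀ x, P x ≤ 1) ∧ (∀ s : α, P [s] = 1) ∧
  (∀ s : α, (∑ t : α, P [s, t]) ≤ 1) ∧
  (∀ (x y : List α) (s : α), P (x ++ s :: y) = P (x ++ [s]) * P (s :: y))

/-- `(K)₀^M`: the interior of `K` in the DTMC `(P, a)`: states of `K` other than `a`
with no incoming transition from outside `K`. -/
def interior [Fintype α] [DecidableEq α] (P : List α → ℝ≥0∞) (a : α) (K : Finset α) :
    Set α :=
  {s | s ∈ K ∧ s ≠ a ∧ (∑ t ∈ Kᶜ, P [t, s]) = 0}

open Classical in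
noncomputable def abstr [Fintype α] [DecidableEq α]
    (P : List α → ℝ≥0∞) (a : α) (K : Finset α) : List α → ℝ≥0∞ :=
  fun x =>
    if x.length = 1 then 1
    else if 2 ≤ x.length ∧ ∃ s ∈ x, s ∈ interior P a K then 0
    else setP P (preim K x)

open Classical in
noncomputable def OutSet [Fintype α] (P : List α → ℝ≥0∞) (S₁ : Finset α) : Finset α :=
  Finset.univ.filter fun t => t ∉ S₁ ∧ 0 < ∑ s ∈ S₁, P [s, t]

open Classical in
noncomputable def USet [Fintype α] (P : List α → ℝ≥0∞) (S₁ : Finset α) : Finset α :=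
  Finset.univ.filter fun r => r ∈ S₁ ∧
    0 < setP P {x | ∃ (w : List α) (t : α),
      x = r :: (w ++ [t]) ∧ (∀ c ∈ w, c ∈ S₁) ∧ t ∈ OutSet P S₁}

open Classical in
noncomputable def U1Set [Fintype α] (P : List α → ℝ≥0∞) (S₁ : Finset α) : Finset α :=
  Finset.univ.filter fun r => r ∈ S₁ ∧ 0 < ∑ t ∈ OutSet P S₁, P [r, t]

end PA

/-!
For `K ⊆ L`, contracting by `K` before contracting by `L` changes nothing, and a word is a
prefix-minimal element of `x + L` iff it contracts to `x` and does not end in two letters of `L`.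
Hence the prefix-minimal words of `x + S₂` are partitioned by their `S₁`-contractions `y`, which
again range over the prefix-minimal words of `x + S₂`, the fibre over `y` being the prefix-minimal
part of `y + S₁`; summing `P` over this partition gives `∑_y (M − S₁)(y) = P(x + S₂)`.

The `S₂`-interiors of `M` and `M − S₁` agree: a transition from outside `S₂` comes from outside
`S₁`, so `M − S₁` keeps it unless it enters the `S₁`-interior, where both vanish. Where `M − S₁`
sets a path through its interior to `0`, `P` already vanishes on its preimages, except on those
starting at the interior state; these occur only if `x` meets the `S₂`-interior, where both sides
of the theorem are `0` anyway.
-/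

namespace PA

variable {α : Type*} {K L : Finset α}

def EndsInPair (K : Finset α) (y : List α) : Prop :=
  ∃ u b c, y = u ++ [b, c] ∧ b ∈ K ∧ c ∈ K

lemma EndsInPair.mono (hKL : K ⊆ L) {y : List α} (h : EndsInPair K y) : EndsInPair L y := by
  obtain ⟨u, b, c, rfl, hb, hc⟩ := h
  exact ⟨u, b, c, rfl, hKL hb, hKL hc⟩

lemma endsInPair_append_cons {u w : List α} {b : α} (hb : b ∈ K) (hw : ∀ c ∈ w, c ∈ K)
    (hne : w ≠ []) : EndsInPair K (u ++ b :: w) := by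
  obtain ⟨w', c, rfl⟩ := w.eq_nil_or_concat'.resolve_left hne
  obtain ⟨v, d, hv⟩ := (b :: w').eq_nil_or_concat'.resolve_left (List.cons_ne_nil _ _)
  have hd : d ∈ b :: w' := by simp [hv]
  refine ⟨u ++ v, d, c, ?_, ?_, hw c (by simp)⟩
  · rw [← List.cons_append, hv]; simp
  · rcases List.mem_cons.mp hd with rfl | hd
    exacts [hb, hw d (by simp [hd])]

section Contraction

variable [DecidableEq α]

lemma contractAux_cons (K : Finset α) (p : Bool) (b : α) (w : List α) :
    contractAux K p (b :: w) =
      (if b ∈ K ∧ p then [] else [b]) ++ contractAux K (decide (b ∈ K)) w := by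
  by_cases hb : b ∈ K <;> cases p <;> simp [contractAux, hb]

lemma contract_cons (K : Finset α) (b : α) (w : List α) :
    contract K (b :: w) = b :: contractAux K (decide (b ∈ K)) w := by
  simp [contract, contractAux_cons]

/-- The `prev` flag of `contractAux` after reading `u`. -/
def blockState (K : Finset α) (p : Bool) (u : List α) : Bool :=
  u.foldl (fun _ b => decide (b ∈ K)) p

@[simp] lemma blockState_nil (p : Bool) : blockState K p [] = p := rfl

@[simp] lemma blockState_cons (p : Bool) (b : α) (u : List α) :
    blockState K p (b :: u) = blockState K (decide (b ∈ K)) u := rfl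

@[simp] lemma blockState_append_singleton (p : Bool) (u : List α) (b : α) :
    blockState K p (u ++ [b]) = decide (b ∈ K) := by
  simp [blockState, List.foldl_append]

lemma contractAux_append (K : Finset α) : ∀ (u : List α) (p : Bool) (v : List α),
    contractAux K p (u ++ v) = contractAux K p u ++ contractAux K (blockState K p u) v
  | [], _, _ => rfl
  | b :: u, p, v => by
    simp only [List.cons_append, contractAux_cons, contractAux_append K u, blockState_cons,
      List.append_assoc]

lemma contractAux_singleton (K : Finset α) (p : Bool) (b : α) :
    contractAux K p [b] = if b ∈ K ∧ p then [] else [b] := by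
  rw [contractAux_cons]; simp [contractAux]

lemma contract_append_singleton (K : Finset α) (u : List α) (b : α) :
    contract K (u ++ [b]) =
      contract K u ++ if b ∈ K ∧ blockState K false u then [] else [b] := by
  rw [contract, contractAux_append, contractAux_singleton, contract]

lemma eq_nil_or_forall_mem_of_contractAux_eq_nil (K : Finset α) :
    ∀ {p : Bool} {v : List α}, contractAux K p v = [] → v = [] ∨ (p ∧ ∀ b ∈ v, b ∈ K)
  | _, [], _ => Or.inl rfl
  | p, b :: w, h => by
    rw [contractAux_cons, List.append_eq_nil_iff] at h
    have hb : b ∈ K ∧ p := by_contra fun hc => by simp [if_neg hc] at h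
    right
    refine ⟨hb.2, ?_⟩
    rcases eq_nil_or_forall_mem_of_contractAux_eq_nil K h.2 with rfl | ⟨-, hw⟩
    · simpa using hb.1
    · simpa [hb.1] using hw

lemma contractAux_contractAux (hKL : K ⊆ L) :
    ∀ (z : List α) {p q : Bool}, (q → p) →
      contractAux L p (contractAux K q z) = contractAux L p z
  | [], _, _, _ => rfl
  | b :: z, p, q, hqp => by
    by_cases hbK : b ∈ K
    · have hbL := hKL hbK
      cases q <;> cases p <;> simp_all [contractAux, contractAux_contractAux hKL z]
    · by_cases hbL : b ∈ L <;> simp [contractAux, hbK, hbL, contractAux_contractAux hKL z]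

theorem contract_contract (hKL : K ⊆ L) (z : List α) :
    contract L (contract K z) = contract L z :=
  contractAux_contractAux hKL z id

lemma exists_eq_append_singleton_of_blockState {u : List α} (h : blockState K false u) :
    ∃ w b, u = w ++ [b] ∧ b ∈ K := by
  rcases u.eq_nil_or_concat' with rfl | ⟨w, b, rfl⟩
  · simp at h
  · exact ⟨w, b, rfl, by simpa using h⟩

lemma exists_contract_append_singleton (u : List α) {b : α} (hb : b ∈ K) :
    ∃ w d, contract K (u ++ [b]) = w ++ [d] ∧ d ∈ K := by
  induction u using List.reverseRecOn generalizing b with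
  | nil => exact ⟨[], b, by simp [contract, contractAux, hb], hb⟩
  | append_singleton u c ih =>
    by_cases hc : c ∈ K
    · obtain ⟨w, d, hw, hd⟩ := ih hc
      exact ⟨w, d, by rw [contract_append_singleton]; simp [hb, hc, hw], hd⟩
    · exact ⟨contract K (u ++ [c]), b, by rw [contract_append_singleton]; simp [hc], hb⟩

lemma exists_eq_append_cons_of_mem_contractAux {s : α} (hs : s ∈ K) :
    ∀ {p : Bool} {z : List α}, s ∈ contractAux K p z →
      ∃ u v, z = u ++ s :: v ∧ blockState K p u = false
  | _, [], h => by simp [contractAux] at h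
  | p, b :: w, h => by
    rw [contractAux_cons, List.mem_append] at h
    rcases h with h | h
    · split_ifs at h with hb
      · simp at h
      · obtain rfl := List.mem_singleton.mp h
        exact ⟨[], w, rfl, by simpa [hs] using hb⟩
    · obtain ⟨u, v, rfl, hu⟩ := exists_eq_append_cons_of_mem_contractAux hs h
      exact ⟨b :: u, v, rfl, hu⟩

theorem mem_minPref_preim_iff {x y : List α} :
    y ∈ minPref (preim K x) ↔ contract K y = x ∧ ¬EndsInPair K y := by
  constructor
  · rintro ⟨hy, hmin⟩
    refine ⟨hy, ?_⟩
    rintro ⟨u, b, c, rfl, hb, hc⟩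
    refine hmin (u ++ [b]) ⟨[c], by simp⟩ (by simp) ?_
    have : contract K (u ++ [b] ++ [c]) = contract K (u ++ [b]) := by
      rw [contract_append_singleton]; simp [hb, hc]
    simpa [preim, ← this] using hy
  · rintro ⟨hy, hpair⟩
    refine ⟨hy, ?_⟩
    rintro y' ⟨v, rfl⟩ hne hy'
    have hv : v ≠ [] := by rintro rfl; simp at hne
    have hnil : contractAux K (blockState K false y') v = [] := by
      have := hy.trans (show contract K y' = x from hy').symm
      simpa [contract, contractAux_append] using this
    rcases eq_nil_or_forall_mem_of_contractAux_eq_nil K hnil with rfl | ⟨hst, hvK⟩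
    · exact hv rfl
    · obtain ⟨w, b, rfl, hb⟩ := exists_eq_append_singleton_of_blockState hst
      exact hpair (by simpa using endsInPair_append_cons (u := w) hb hvK hv)

lemma EndsInPair.or_contract (hKL : K ⊆ L) {z : List α} (h : EndsInPair L z) :
    EndsInPair K z ∨ EndsInPair L (contract K z) := by
  obtain ⟨u, b, c, rfl, hbL, hcL⟩ := h
  have hz : u ++ [b, c] = u ++ [b] ++ [c] := by simp
  by_cases hcK : c ∈ K
  · by_cases hbK : b ∈ K
    · exact Or.inl ⟨u, b, c, rfl, hbK, hcK⟩
    · refine Or.inr ⟨contract K u, b, c, ?_, hbL, hcL⟩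
      rw [hz, contract_append_singleton, contract_append_singleton]
      simp [hbK]
  · obtain ⟨w, d, hw, hdL⟩ : ∃ w d, contract K (u ++ [b]) = w ++ [d] ∧ d ∈ L := by
      by_cases hbK : b ∈ K
      · obtain ⟨w, d, hw, hd⟩ := exists_contract_append_singleton u hbK
        exact ⟨w, d, hw, hKL hd⟩
      · exact ⟨contract K u, b, by rw [contract_append_singleton]; simp [hbK], hbL⟩
    refine Or.inr ⟨w, d, c, ?_, hdL, hcL⟩
    rw [hz, contract_append_singleton, hw]
    simp [hcK]

lemma EndsInPair.of_contract (hKL : K ⊆ L) {z : List α} (h : EndsInPair L (contract K z)) :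
    EndsInPair L z := by
  obtain ⟨u, d, c, hz, hdL, hcL⟩ := h
  rcases z.eq_nil_or_concat' with rfl | ⟨z, e, rfl⟩
  · simp [contract, contractAux] at hz
  rw [contract_append_singleton] at hz
  split_ifs at hz with he
  · obtain ⟨z, b, rfl, hb⟩ := exists_eq_append_singleton_of_blockState he.2
    exact ⟨z, b, e, by simp, hKL hb, hKL he.1⟩
  obtain ⟨hzu, rfl⟩ : contract K z = u ++ [d] ∧ e = c := by
    simpa using List.append_inj' (hz.trans (List.append_cons u d [c])) rfl
  rcases z.eq_nil_or_concat' with rfl | ⟨z, b, rfl⟩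
  · simp [contract, contractAux] at hzu
  refine ⟨z, b, e, by simp, ?_, hcL⟩
  by_cases hbK : b ∈ K
  · exact hKL hbK
  · rw [contract_append_singleton] at hzu
    obtain ⟨-, rfl⟩ : contract K z = u ∧ b = d := by simpa [hbK] using hzu
    exact hdL

lemma contract_mem_minPref_preim (hKL : K ⊆ L) {x z : List α}
    (hz : z ∈ minPref (preim L x)) : contract K z ∈ minPref (preim L x) := by
  rw [mem_minPref_preim_iff] at hz ⊢
  exact ⟨(contract_contract hKL z).trans hz.1, fun h => hz.2 (h.of_contract hKL)⟩

lemma mem_minPref_preim_contract (hKL : K ⊆ L) {x z : List α}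
    (hz : z ∈ minPref (preim L x)) : z ∈ minPref (preim K (contract K z)) :=
  mem_minPref_preim_iff.mpr ⟨rfl, fun h => (mem_minPref_preim_iff.mp hz).2 (h.mono hKL)⟩

lemma mem_minPref_preim_of_mem_minPref_preim (hKL : K ⊆ L) {x y z : List α}
    (hy : y ∈ minPref (preim L x)) (hz : z ∈ minPref (preim K y)) :
    z ∈ minPref (preim L x) := by
  rw [mem_minPref_preim_iff] at hy hz ⊢
  obtain ⟨rfl, hz⟩ := hz
  exact ⟨(contract_contract hKL z).symm.trans hy.1, fun h => (h.or_contract hKL).elim hz hy.2⟩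

def sigmaMinPrefPreimEquiv (hKL : K ⊆ L) (x : List α) :
    (Σ y : minPref (preim L x), minPref (preim K y.1)) ≃ minPref (preim L x) where
  toFun p := ⟨p.2.1, mem_minPref_preim_of_mem_minPref_preim hKL p.1.2 p.2.2⟩
  invFun z := ⟨⟨contract K z.1, contract_mem_minPref_preim hKL z.2⟩,
    ⟨z.1, mem_minPref_preim_contract hKL z.2⟩⟩
  left_inv := by
    rintro ⟨⟨y, hy⟩, ⟨z, hz⟩⟩
    obtain rfl : contract K z = y := (mem_minPref_preim_iff.mp hz).1
    rfl
  right_inv _ := rfl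

theorem tsum_setP_preim (hKL : K ⊆ L) (P : List α → ℝ≥0∞) (x : List α) :
    ∑' y : minPref (preim L x), setP P (preim K y.1) = setP P (preim L x) :=
  (ENNReal.tsum_sigma' fun p : Σ y : minPref (preim L x), minPref (preim K y.1) =>
    P p.2.1).symm.trans ((sigmaMinPrefPreimEquiv hKL x).tsum_eq fun z => P z.1)

lemma minPref_preim_pair {t s : α} (ht : t ∉ K) : minPref (preim K [t, s]) = {[t, s]} := by
  ext y
  rw [Set.mem_singleton_iff, mem_minPref_preim_iff]
  constructor
  · rintro ⟨hy, hpair⟩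
    rcases y with _ | ⟨b, _ | ⟨s', w⟩⟩
    · simp [contract, contractAux] at hy
    · simp [contract, contractAux] at hy
    rw [contract_cons, List.cons.injEq] at hy
    obtain ⟨rfl, hy⟩ := hy
    obtain ⟨rfl, hw⟩ : s' = s ∧ contractAux K (decide (s' ∈ K)) w = [] := by
      simpa [contractAux_cons, ht] using hy
    rcases eq_or_ne w [] with rfl | hne
    · rfl
    obtain ⟨hs, hwK⟩ := (eq_nil_or_forall_mem_of_contractAux_eq_nil K hw).resolve_left hne
    exact (hpair (endsInPair_append_cons (u := [b]) (of_decide_eq_true hs) hwK hne)).elim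
  · rintro rfl
    refine ⟨by simp [contract_cons, ht, contractAux], ?_⟩
    rintro ⟨u, b, c, hu, hb, -⟩
    rcases u with _ | ⟨_, _ | ⟨_, _⟩⟩ <;> simp_all

end Contraction

section Abstraction

variable [Fintype α] {P : List α → ℝ≥0∞}

lemma IsTPF.apply_append_cons_cons (hP : IsTPF P) (u v : List α) (t s : α) :
    P (u ++ t :: s :: v) = P (u ++ [t]) * P [t, s] * P (s :: v) := by
  rw [hP.2.2.2 u, mul_assoc]
  exact congrArg _ (hP.2.2.2 [t] v s)

variable [DecidableEq α] {S₁ S₂ : Finset α} {a : α}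

lemma interior_mono (h : S₁ ⊆ S₂) :
    interior P a S₁ ⊆ interior P a S₂ := by
  rintro s ⟨hs, hsa, hsum⟩
  exact ⟨h hs, hsa, Finset.sum_eq_zero fun t ht =>
    Finset.sum_eq_zero_iff.mp hsum t (Finset.compl_subset_compl.mpr h ht)⟩

open Classical in
lemma abstr_pair {t s : α} (ht : t ∉ K) :
    abstr P a K [t, s] = if s ∈ interior P a K then 0 else P [t, s] := by
  have ht' : t ∉ interior P a K := fun h => ht h.1
  have hset : setP P (preim K [t, s]) = P [t, s] := by
    rw [setP, minPref_preim_pair ht, tsum_singleton]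
  simp [abstr, ht', hset]

open Classical in
lemma interior_abstr (h : S₁ ⊆ S₂) :
    interior (abstr P a S₁) a S₂ = interior P a S₂ := by
  ext s
  refine and_congr_right fun _ => and_congr_right fun _ => ?_
  have hpair : ∀ t ∈ S₂ᶜ,
      abstr P a S₁ [t, s] = if s ∈ interior P a S₁ then 0 else P [t, s] :=
    fun t ht => abstr_pair fun ht₁ => Finset.mem_compl.mp ht (h ht₁)
  rw [Finset.sum_congr rfl hpair]
  split_ifs with hs
  · simpa using (interior_mono h hs).2.2
  · rfl

lemma eq_cons_or_apply_eq_zero_of_mem_interior (hP : IsTPF P) {s : α} (hs : s ∈ interior P a K)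
    {z : List α} (hz : s ∈ contract K z) : (∃ v, z = s :: v) ∨ P z = 0 := by
  obtain ⟨u, v, rfl, hu⟩ := exists_eq_append_cons_of_mem_contractAux hs.1 hz
  rcases u.eq_nil_or_concat' with rfl | ⟨u, t, rfl⟩
  · exact Or.inl ⟨v, rfl⟩
  · have ht : t ∈ Kᶜ := by simpa using hu
    right
    rw [List.append_assoc, List.singleton_append, hP.apply_append_cons_cons,
      Finset.sum_eq_zero_iff.mp hs.2.2 t ht, mul_zero, zero_mul]

lemma abstr_eq_setP_preim (hP : IsTPF P) (h : S₁ ⊆ S₂) {x y : List α}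
    (hx : ∀ s ∈ x, s ∉ interior P a S₂) (hxlen : x.length ≠ 1)
    (hy : y ∈ minPref (preim S₂ x)) :
    abstr P a S₁ y = setP P (preim S₁ y) := by
  have hyx : contract S₂ y = x := (mem_minPref_preim_iff.mp hy).1
  have hylen : y.length ≠ 1 := by
    intro hy1
    obtain ⟨b, rfl⟩ := List.length_eq_one_iff.mp hy1
    exact hxlen (by simp [← hyx, contract, contractAux])
  rw [abstr, if_neg hylen]
  split_ifs with hhit
  · -- a preimage of `y` enters `s` from outside `S₁`, which has probability `0`,
    -- or starts at `s`, and then so does `x`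
    obtain ⟨-, s, hsy, hs⟩ := hhit
    refine (ENNReal.tsum_eq_zero.mpr fun ⟨z, hz⟩ => ?_).symm
    have hzy : contract S₁ z = y := (mem_minPref_preim_iff.mp hz).1
    refine (eq_cons_or_apply_eq_zero_of_mem_interior hP hs (hzy ▸ hsy)).resolve_left ?_
    rintro ⟨v, rfl⟩
    refine hx s ?_ (interior_mono h hs)
    simp [← hyx, ← hzy, contract_cons]
  · rfl

lemma setP_abstr_preim (hP : IsTPF P) (h : S₁ ⊆ S₂) {x : List α}
    (hx : ∀ s ∈ x, s ∉ interior P a S₂) (hxlen : x.length ≠ 1) :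
    setP (abstr P a S₁) (preim S₂ x) = setP P (preim S₂ x) := by
  rw [← tsum_setP_preim h P x, setP]
  exact tsum_congr fun y => abstr_eq_setP_preim hP h hx hxlen y.2

end Abstraction

end PA

open scoped ENNReal in
/-- monotonic absorption: for `S₁ ⊆ S₂`, `(M − S₁) − S₂ = M − S₂`. -/
theorem abstr_abstr {α : Type*} [Fintype α] [DecidableEq α]
    (a : α) (S₁ S₂ : Finset α) (h : S₁ ⊆ S₂)
    (P : List α → ℝ≥0∞) (hP : PA.IsTPF P) :
    PA.abstr (PA.abstr P a S₁) a S₂ = PA.abstr P a S₂ := by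
  funext x
  rw [PA.abstr, PA.abstr, PA.interior_abstr h]
  split_ifs with hlen hhit
  · rfl
  · rfl
  · refine PA.setP_abstr_preim hP h (fun s hs hint => hhit ⟨?_, s, hs, hint⟩) hlen
    have := List.length_pos_of_mem hs
    omega
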